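/- Let p be a prime and let Δ_p = ℤ_p be the additive group of p-adic integers with its usual compact topology. Then Δ_p admits a dense subgroup D that is not Haar-measurable and satisfies |Δ_p/D| = 𝔠. -/

import Mathlib

/-!
Work inside the ℚ-vector space `ℚ_[p] ⊇ ℤ_[p]`. There are only `𝔠` Borel sets, and each Borel
set of positive Haar measure is uncountable, hence of cardinality `𝔠`. A transfinite recursion of
length `𝔠` therefore chooses a ℚ-linearly independent family consisting of one point `x_B` in
every Borel set `B` of positive measure together with `𝔠` further points `e_z` of `ℤ_[p]`: at each
stage fewer than `𝔠` points have been chosen, and their ℚ-span is too small to exhaust the next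
target set. The subgroup `D` of points of `ℤ_[p]` in the ℚ-span of the `x_B` meets every set of
positive measure, and the `e_z` lie in pairwise distinct cosets of `D`. A null-measurable proper
subgroup cannot meet every set of positive measure: its complement would be null, and a translate
of that complement covers the subgroup.
-/

open MeasureTheory Set Submodule Cardinal Filter Topology Pointwise

universe u

theorem Submodule.mk_span_le {R M : Type u} [Semiring R] [AddCommMonoid M] [Module R M]
    (s : Set M) : #(span R s) ≤ max ℵ₀ (#s * #R) := by
  classical
  rw [Finsupp.span_eq_range_linearCombination]
  calc #(LinearMap.range (Finsupp.linearCombination R ((↑) : s → M)))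
      ≤ #(s →₀ R) := mk_range_le
    _ ≤ #(Finset (s × R)) := mk_le_of_injective (Finsupp.graph_injective _ _)
    _ ≤ #(List (s × R)) := mk_le_of_surjective List.toFinset_surjective
    _ ≤ max ℵ₀ (#s * #R) :=
      (mk_list_le_max _).trans_eq (by rw [Cardinal.mk_prod, lift_id, lift_id])

theorem linearIndependent_of_notMem_span_image_Iio {K V ι : Type*} [DivisionRing K]
    [AddCommGroup V] [Module K V] [LinearOrder ι] {v : ι → V}
    (hv : ∀ i, v i ∉ span K (v '' Iio i)) : LinearIndependent K v := by
  classical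
  rw [linearIndependent_iff_finset_linearIndependent]
  intro s
  change LinearIndepOn K v (s : Set ι)
  induction s using Finset.induction_on_max with
  | empty => simp
  | insert a s hlt ih =>
    rw [Finset.coe_insert, linearIndepOn_insert fun ha => (hlt a ha).false]
    exact ⟨ih, fun h => hv a (span_mono (image_mono fun x hx => hlt x hx) h)⟩

theorem exists_linearIndependent_forall_mem_of_wellFoundedLT {K V ι : Type u} [DivisionRing K]
    [AddCommGroup V] [Module K V] [LinearOrder ι] [WellFoundedLT ι] {κ : Cardinal.{u}}
    (hκ : ℵ₀ < κ) (hK : #K < κ) (hι : ∀ i : ι, #(Iio i) < κ) (s : ι → Set V)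
    (hs : ∀ i, κ ≤ #(s i)) : ∃ v : ι → V, (∀ i, v i ∈ s i) ∧ LinearIndependent K v := by
  have step (i : ι) (w : ∀ j, j < i → V) :
      ∃ x ∈ s i, x ∉ span K (range fun j : Iio i => w j j.2) := by
    by_contra! h
    have hspan : #(span K (range fun j : Iio i => w j j.2)) < κ :=
      (mk_span_le _).trans_lt <| max_lt hκ <| mul_lt_of_lt hκ.le (mk_range_le.trans_lt (hι i)) hK
    exact (hs i).not_gt ((mk_le_mk_of_subset h).trans_lt hspan)
  let v : ι → V := WellFoundedLT.fix fun i w => (step i w).choose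
  have hv (i : ι) : v i ∈ s i ∧ v i ∉ span K (v '' Iio i) := by
    rw [show v i = (step i fun j _ => v j).choose from WellFoundedLT.fix_eq _ i, image_eq_range]
    exact (step i fun j _ => v j).choose_spec
  exact ⟨v, fun i => (hv i).1, linearIndependent_of_notMem_span_image_Iio fun i => (hv i).2⟩

theorem exists_linearIndependent_forall_mem {K V ι : Type u} [DivisionRing K] [AddCommGroup V]
    [Module K V] {κ : Cardinal.{u}} (hκ : ℵ₀ < κ) (hK : #K < κ) (hι : #ι ≤ κ) (s : ι → Set V)
    (hs : ∀ i, κ ≤ #(s i)) : ∃ v : ι → V, (∀ i, v i ∈ s i) ∧ LinearIndependent K v := by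
  rcases isEmpty_or_nonempty ι with hι' | hι'
  · exact ⟨isEmptyElim, isEmptyElim, linearIndependent_empty_type⟩
  obtain ⟨e⟩ : Nonempty (ι ↪ κ.ord.ToType) := by rwa [← Cardinal.le_def, mk_toType, card_ord]
  obtain ⟨w, hw, hw_ind⟩ := exists_linearIndependent_forall_mem_of_wellFoundedLT hκ hK
    (fun o => by simpa using mk_Iio_lt o) (fun o => s (Function.invFun e o)) fun o => hs _
  refine ⟨w ∘ e, fun i => ?_, hw_ind.comp e e.injective⟩
  simpa [Function.leftInverse_invFun e.injective i] using hw (e i)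

theorem LinearIndependent.sub_notMem_span_range_inl {K V ι ι' : Type*} [DivisionRing K]
    [AddCommGroup V] [Module K V] {v : ι ⊕ ι' → V} (hv : LinearIndependent K v) {j j' : ι'}
    (hj : j ≠ j') : v (.inr j) - v (.inr j') ∉ span K (range (v ∘ .inl)) := by
  rw [← Sum.elim_comp_inl_inr v, linearIndependent_sum] at hv
  obtain ⟨-, hinr, hdisj⟩ := hv
  intro hmem
  have hsub : v (.inr j) - v (.inr j') ∈ span K (range (v ∘ .inr)) :=
    sub_mem (subset_span ⟨j, rfl⟩) (subset_span ⟨j', rfl⟩)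
  exact hj (hinr.injective (sub_eq_zero.1 (disjoint_def.1 hdisj _ hmem hsub)))

theorem MeasurableSet.mk_eq_continuum_of_not_countable {α : Type*} [MeasurableSpace α]
    [StandardBorelSpace α] {s : Set α} (hs : MeasurableSet s) (hsc : ¬ s.Countable) :
    #s = 𝔠 := by
  have := hs.standardBorel
  have e := PolishSpace.measurableEquivNatBoolOfNotCountable (α := s) (by rwa [countable_coe_iff])
  simpa using lift_mk_eq'.2 ⟨e.toEquiv⟩

theorem MeasurableSpace.mk_measurableSet_le_continuum {α : Type*} [MeasurableSpace α]
    [MeasurableSpace.CountablyGenerated α] : #{s : Set α | MeasurableSet s} ≤ 𝔠 := by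
  obtain ⟨b, hb, rfl⟩ := MeasurableSpace.CountablyGenerated.isCountablyGenerated (α := α)
  exact cardinal_measurableSet_le_continuum (hb.le_aleph0.trans aleph0_le_continuum)

theorem AddSubgroup.not_nullMeasurableSet_of_inter_nonempty {G : Type*} [AddGroup G]
    [MeasurableSpace G] [MeasurableAdd G] {μ : Measure G} [μ.IsAddLeftInvariant] [NeZero μ]
    {H : AddSubgroup G} (hH : H ≠ ⊤)
    (hmeets : ∀ s, MeasurableSet s → 0 < μ s → (s ∩ H).Nonempty) :
    ¬ NullMeasurableSet H μ := by
  intro hnull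
  obtain ⟨g, hg⟩ : ∃ g, g ∉ H := by
    by_contra! h
    exact hH (eq_top_iff.2 fun g _ => h g)
  have hcompl : μ (H : Set G)ᶜ = 0 := by
    obtain ⟨t, hts, ht, hae⟩ := hnull.compl.exists_measurable_subset_ae_eq
    rw [← measure_congr hae]
    by_contra hpos
    obtain ⟨x, hxt, hxH⟩ := hmeets t ht (pos_iff_ne_zero.2 hpos)
    exact hts hxt hxH
  have hcover : Set.univ ⊆ (H : Set G)ᶜ ∪ (g +ᵥ (H : Set G)ᶜ) := by
    intro h _
    by_cases hh : h ∈ H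
    · refine Or.inr ⟨-g + h, fun hmem => hg ?_, by simp⟩
      simpa using H.sub_mem hh hmem
    · exact Or.inl hh
  exact NeZero.ne μ <| Measure.measure_univ_eq_zero.1 <|
    measure_mono_null hcover (measure_union_null hcompl (measure_vadd_null hcompl g))

instance PadicInt.nhdsNE_zero_neBot (p : ℕ) [Fact p.Prime] : (𝓝[≠] (0 : ℤ_[p])).NeBot := by
  rw [← mem_closure_iff_nhdsWithin_neBot]
  refine mem_closure_of_tendsto (f := fun n : ℕ => (p : ℤ_[p]) ^ n)
    (tendsto_pow_atTop_nhds_zero_of_norm_lt_one ?_)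
    (Eventually.of_forall fun n => pow_ne_zero n ?_)
  · rw [PadicInt.norm_p]
    exact inv_lt_one_of_one_lt₀ (by exact_mod_cast (Fact.out : p.Prime).one_lt)
  · exact_mod_cast (Fact.out : p.Prime).ne_zero

theorem exists_addSubgroup_forall_inter_nonempty_mk_quotient {G V : Type} [AddCommGroup G]
    [AddCommGroup V] [Module ℚ V] {f : G →+ V} (hf : Function.Injective f) (hG : #G = 𝔠)
    (𝒮 : Set (Set G)) (h𝒮 : #𝒮 ≤ 𝔠) (hs : ∀ s ∈ 𝒮, 𝔠 ≤ #s) :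
    ∃ D : AddSubgroup G, (∀ s ∈ 𝒮, (s ∩ D).Nonempty) ∧ #(G ⧸ D) = 𝔠 := by
  obtain ⟨v, hv_mem, hv_ind⟩ := exists_linearIndependent_forall_mem (K := ℚ) (ι := ↥𝒮 ⊕ G)
    aleph0_lt_continuum (by simp [aleph0_lt_continuum])
    (by simpa [hG, continuum_add_self] using add_le_add_left h𝒮 𝔠)
    (Sum.elim (fun s => f '' s.1) fun _ => range ⇑f) (by
      rintro (s | z)
      · exact (hs s s.2).trans (mk_image_eq hf).ge
      · exact hG.ge.trans (mk_range_eq _ hf).ge)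
  have hv_inl (s : 𝒮) : ∃ y ∈ s.1, f y = v (.inl s) := hv_mem (.inl s)
  have hv_inr (z : G) : ∃ y, f y = v (.inr z) := hv_mem (.inr z)
  choose x hx using hv_inl
  choose e he using hv_inr
  let D : AddSubgroup G := (span ℚ (range (v ∘ .inl))).toAddSubgroup.comap f
  have he_inj : Function.Injective fun z => (e z : G ⧸ D) := by
    intro z z' h
    by_contra hne
    refine hv_ind.sub_notMem_span_range_inl hne ?_
    have hmem : f (e z - e z') ∈ span ℚ (range (v ∘ .inl)) :=
      (QuotientAddGroup.eq_iff_sub_mem).1 h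
    rwa [map_sub, he, he] at hmem
  refine ⟨D, fun s hs => ⟨x ⟨s, hs⟩, (hx ⟨s, hs⟩).1, ?_⟩, le_antisymm ?_ ?_⟩
  · show f (x ⟨s, hs⟩) ∈ span ℚ (range (v ∘ .inl))
    rw [(hx ⟨s, hs⟩).2]
    exact subset_span ⟨_, rfl⟩
  · exact (mk_le_of_surjective QuotientAddGroup.mk_surjective).trans hG.le
  · exact hG.symm.le.trans (mk_le_of_injective he_inj)

theorem stmt8_general (p : ℕ) [Fact p.Prime]
    [MeasurableSpace ℤ_[p]] [BorelSpace ℤ_[p]]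
    (μ : Measure ℤ_[p]) [μ.IsAddHaarMeasure] :
    ∃ D : AddSubgroup ℤ_[p], Dense (D : Set ℤ_[p]) ∧
      ¬ NullMeasurableSet (D : Set ℤ_[p]) μ ∧
      Cardinal.mk (ℤ_[p] ⧸ D) = Cardinal.continuum := by
  have hcard (s : Set ℤ_[p]) (hs : MeasurableSet s) (hpos : 0 < μ s) : #s = 𝔠 :=
    hs.mk_eq_continuum_of_not_countable fun hc => hpos.ne' (hc.measure_zero μ)
  have hZ : #ℤ_[p] = 𝔠 := by
    simpa using hcard univ .univ (Measure.measure_univ_pos.2 (NeZero.ne μ))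
  obtain ⟨D, hD, hDcard⟩ := exists_addSubgroup_forall_inter_nonempty_mk_quotient
    (f := PadicInt.Coe.ringHom.toAddMonoidHom) (fun _ _ => PadicInt.ext) hZ
    {s | MeasurableSet s ∧ 0 < μ s}
    ((mk_le_mk_of_subset fun _ hs => hs.1).trans MeasurableSpace.mk_measurableSet_le_continuum)
    fun s hs => (hcard s hs.1 hs.2).ge
  refine ⟨D, ?_, ?_, hDcard⟩
  · exact dense_iff_inter_open.2 fun U hU hne => hD U ⟨hU.measurableSet, hU.measure_pos μ hne⟩
  · refine AddSubgroup.not_nullMeasurableSet_of_inter_nonempty (fun htop => ?_)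
      fun s hs hpos => hD s ⟨hs, hpos⟩
    subst htop
    have hle : #(ℤ_[p] ⧸ (⊤ : AddSubgroup ℤ_[p])) ≤ 1 :=
      le_one_iff_subsingleton.2 QuotientAddGroup.subsingleton_quotient_top
    exact (hDcard ▸ hle).not_gt (one_lt_aleph0.trans aleph0_lt_continuum)

theorem stmt8 (p : ℕ) [Fact p.Prime]
    [MeasurableSpace ℤ_[p]] [BorelSpace ℤ_[p]]
    (μ : Measure ℤ_[p]) [μ.IsAddHaarMeasure] (hμ : μ Set.univ = 1) :
    ∃ D : AddSubgroup ℤ_[p], Dense (D : Set ℤ_[p]) ∧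
      ¬ NullMeasurableSet (D : Set ℤ_[p]) μ ∧
      Cardinal.mk (ℤ_[p] ⧸ D) = Cardinal.continuum :=
  stmt8_general p μ
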